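/- arXiv:math/0306433 — 9 statements merged into one kernel-verified Lean document; each statement's English description precedes it below -/
import Mathlib

section
/- Suppose F, X: ℝ → ℝ are continuous and there exist A ∈ C, R ∈ ΩC^z with z > 1 such that F_s (X_t - X_s) = (A_t - A_s) - R_{st} for all s,t. If F', A', R' is another such decomposition with R' ∈ ΩC^z, then R = R' and A - A' is constant. -/
/-!
Subtracting the two decompositions gives `δ(A - A') = R - R'`, so `A - A'` has increments
bounded by `(K + K') |t - s|^z`. Since `z > 1` this forces the derivative of `A - A'` to vanish
everywhere, hence `A - A'` is constant and then `R - R' = δ(A - A') = 0`.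
-/

open Asymptotics Filter Topology

theorem isLittleO_norm_rpow_id {𝕜 : Type*} [NormedField 𝕜] {z : ℝ} (hz : 1 < z) :
    (fun y : 𝕜 => ‖y‖ ^ z) =o[𝓝 0] id := by
  have hsmall : Tendsto (fun y : 𝕜 => ‖y‖ ^ (z - 1)) (𝓝 0) (𝓝 0) := by
    have := (continuous_norm.rpow_const fun _ => Or.inr (sub_nonneg.2 hz.le)).tendsto (0 : 𝕜)
    simpa [Real.zero_rpow (sub_ne_zero.2 hz.ne')] using this
  have hprod := ((isLittleO_one_iff ℝ).2 hsmall).mul_isBigO (isBigO_refl (fun y : 𝕜 => ‖y‖) (𝓝 0))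
  refine ((hprod.congr_left fun y => ?_).congr_right fun y => one_mul ‖y‖).of_norm_right
  rw [← Real.rpow_add_one' (norm_nonneg y) (by linarith), sub_add_cancel]

section RpowIncrements

variable {𝕜 E : Type*} [RCLike 𝕜] [NormedAddCommGroup E] [NormedSpace 𝕜 E]
  {D : 𝕜 → E} {C z : ℝ}

theorem hasDerivAt_zero_of_norm_sub_le_rpow (hz : 1 < z)
    (hD : ∀ s t, ‖D t - D s‖ ≤ C * ‖t - s‖ ^ z) (x : 𝕜) : HasDerivAt D 0 x := by
  rw [hasDerivAt_iff_isLittleO]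
  simp only [smul_zero, sub_zero]
  have hbig : (fun t => D t - D x) =O[𝓝 x] fun t => ‖t - x‖ ^ z :=
    isBigO_of_le' _ fun t => (hD x t).trans (by rw [Real.norm_of_nonneg (by positivity)])
  exact hbig.trans_isLittleO
    ((isLittleO_norm_rpow_id hz).comp_tendsto (tendsto_sub_nhds_zero_iff.2 tendsto_id))

theorem eq_of_norm_sub_le_rpow (hz : 1 < z) (hD : ∀ s t, ‖D t - D s‖ ≤ C * ‖t - s‖ ^ z)
    (s t : 𝕜) : D t = D s :=
  is_const_of_deriv_eq_zero
    (fun x => (hasDerivAt_zero_of_norm_sub_le_rpow hz hD x).differentiableAt)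
    (fun x => (hasDerivAt_zero_of_norm_sub_le_rpow hz hD x).deriv) t s

end RpowIncrements

theorem young_decomposition_unique_general (F X A A' : ℝ → ℝ)
    (R R' : ℝ → ℝ → ℝ) (z K K' : ℝ) (hz : 1 < z)
    (hR : ∀ s t : ℝ, |R s t| ≤ K * |t - s| ^ z)
    (hR' : ∀ s t : ℝ, |R' s t| ≤ K' * |t - s| ^ z)
    (hdec : ∀ s t : ℝ, F s * (X t - X s) = (A t - A s) - R s t)
    (hdec' : ∀ s t : ℝ, F s * (X t - X s) = (A' t - A' s) - R' s t) :
    (∀ s t : ℝ, R s t = R' s t) ∧ (∀ s t : ℝ, A t - A' t = A s - A' s) := by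
  have hincr : ∀ s t, (A t - A' t) - (A s - A' s) = R s t - R' s t := fun s t => by
    linarith [hdec s t, hdec' s t]
  have hconst : ∀ s t, A t - A' t = A s - A' s := by
    refine eq_of_norm_sub_le_rpow (D := fun t => A t - A' t) (C := K + K') hz fun s t => ?_
    simp only [Real.norm_eq_abs, hincr, add_mul]
    exact (abs_sub _ _).trans (add_le_add (hR s t) (hR' s t))
  exact ⟨fun s t => by linarith [hincr s t, hconst s t], hconst⟩

/-- Uniqueness of the decomposition `F δX = δA - R` with remainder in `ΩC^z`, `z > 1`:
two such decompositions have the same remainder `R` and `A - A'` is constant. -/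
theorem young_decomposition_unique (F X A A' : ℝ → ℝ)
    (hF : Continuous F) (hX : Continuous X) (hA : Continuous A) (hA' : Continuous A')
    (R R' : ℝ → ℝ → ℝ) (z K K' : ℝ) (hz : 1 < z)
    (hR : ∀ s t : ℝ, |R s t| ≤ K * |t - s| ^ z)
    (hR' : ∀ s t : ℝ, |R' s t| ≤ K' * |t - s| ^ z)
    (hdec : ∀ s t : ℝ, F s * (X t - X s) = (A t - A s) - R s t)
    (hdec' : ∀ s t : ℝ, F s * (X t - X s) = (A' t - A' s) - R' s t) :
    (∀ s t : ℝ, R s t = R' s t) ∧ (∀ s t : ℝ, A t - A' t = A s - A' s) :=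
  young_decomposition_unique_general F X A A' R R' z K K' hz hR hR' hdec hdec'
end

section
/- If X: ℝ → ℝ is continuous and there exist A ∈ C and R ∈ ΩC^z, z > 1, with X_s(X_t - X_s) = A_t - A_s - R_{st} for all s,t, then |X_t - X_s|² ≤ 2‖R‖_z |t-s|^z for all s,t; in particular X is (z/2)-Hölder continuous. -/
/-- If `X δX = δA - R` with `R ∈ ΩC^z`, `z > 1`, then
`|X t - X s|² ≤ 2 ‖R‖_z |t-s|^z`; in particular `X` is `z/2`-Hölder continuous. -/
theorem squared_increment_bound (X A : ℝ → ℝ) (hX : Continuous X)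
    (R : ℝ → ℝ → ℝ) (z K : ℝ) (hz : 1 < z) (hK : 0 ≤ K)
    (hR : ∀ s t : ℝ, |R s t| ≤ K * |t - s| ^ z)
    (hdec : ∀ s t : ℝ, X s * (X t - X s) = A t - A s - R s t) :
    ∀ s t : ℝ,
      |X t - X s| ^ 2 ≤ 2 * K * |t - s| ^ z ∧
      |X t - X s| ≤ Real.sqrt (2 * K) * |t - s| ^ (z / 2) := by
  intro s t
  have h1 := hdec s t
  have h2 := hdec t s
  have hsq : (X t - X s) ^ 2 = R s t + R t s := by nlinarith
  have habs : |s - t| = |t - s| := abs_sub_comm s t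
  have hb : (X t - X s) ^ 2 ≤ 2 * K * |t - s| ^ z := by
    have := hR s t
    have h2' := hR t s
    rw [habs] at h2'
    have : R s t + R t s ≤ 2 * K * |t - s| ^ z := by
      have ha := le_abs_self (R s t)
      have hb := le_abs_self (R t s)
      linarith
    linarith [hsq]
  have hb' : |X t - X s| ^ 2 ≤ 2 * K * |t - s| ^ z := by
    rwa [sq_abs]
  refine ⟨hb', ?_⟩
  have h2K : (0 : ℝ) ≤ 2 * K := by linarith
  have hts : (0 : ℝ) ≤ |t - s| := abs_nonneg _
  have key : Real.sqrt (2 * K * |t - s| ^ z)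
      = Real.sqrt (2 * K) * |t - s| ^ (z / 2) := by
    rw [Real.sqrt_mul h2K, Real.sqrt_eq_rpow (|t - s| ^ z), ← Real.rpow_mul hts]
    ring_nf
  calc |X t - X s| = Real.sqrt (|X t - X s| ^ 2) := by
        rw [Real.sqrt_sq (abs_nonneg _)]
    _ ≤ Real.sqrt (2 * K * |t - s| ^ z) := Real.sqrt_le_sqrt hb'
    _ = _ := key
end

section
/- (Sewing lemma / existence of Λ) Let z > 1 and let A: ℝ³ → ℝ be continuous, vanishing when all arguments coincide, lying in the image of N, and satisfying |A_{sut}| ≤ M |u-s|^ρ |t-u|^{z-ρ} for some 0 < ρ < z. Then there exists a unique R ∈ ΩC^z with NR = A, and ‖R‖_z ≤ M/(2^z - 2). -/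
/-!
Write `A = N P`. Passing from `2^k` to `2^(k+1)` equal pieces changes the Riemann sum
`∑ P t_i t_(i+1)` of `P` over `[s, t]` by `2^k` values of `A`, each at most
`M (|t - s| / 2^(k+1))^z`; so these sums converge to some `I s t`, and the geometric series gives
`|P s t - I s t| ≤ M |t - s|^z / (2^z - 2)`, i.e. `R = P - I` works once `I` is additive.
Sums over `(p + q) 2^k` equal pieces split at the ratio `p / (p + q)`, so `I` is additive at
rational points of `[s, t]`; `R` is a locally uniform limit of finite sums of values of `A`, hence
continuous, and density gives additivity at every point between `s` and `t`. Finally, a function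
that is additive at midpoints and `O(|t - s|^z)` with `z > 1` vanishes (halve `k` times): this
makes `I` antisymmetric, hence fully additive, and gives uniqueness.
-/

open Filter Topology Finset

namespace Sewing

/-- The paper's `N`. -/
def coboundary (P : ℝ → ℝ → ℝ) (s u t : ℝ) : ℝ := P s t - P u t - P s u

def CoboundaryBounded (P : ℝ → ℝ → ℝ) (M ρ z : ℝ) : Prop :=
  ∀ s u t, |coboundary P s u t| ≤ M * |u - s| ^ ρ * |t - u| ^ (z - ρ)

noncomputable def gridSum (P : ℝ → ℝ → ℝ) (x h : ℝ) (n : ℕ) : ℝ :=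
  ∑ i ∈ range n, P (x + i * h) (x + (i + 1) * h)

noncomputable def riemannSum (P : ℝ → ℝ → ℝ) (n : ℕ) (s t : ℝ) : ℝ :=
  gridSum P s ((t - s) / n) n

variable {P : ℝ → ℝ → ℝ}

theorem gridSum_add (x h : ℝ) (n m : ℕ) :
    gridSum P x h (n + m) = gridSum P x h n + gridSum P (x + n * h) h m := by
  simp only [gridSum, sum_range_add]
  congr 1
  refine sum_congr rfl fun i _ => ?_
  push_cast
  ring_nf

theorem gridSum_mul (x h : ℝ) (n m : ℕ) :
    gridSum P x h (n * m) = ∑ a ∈ range n, gridSum P (x + a * (m * h)) h m := by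
  induction n with
  | zero => simp [gridSum]
  | succ n ih =>
    rw [Nat.succ_mul, gridSum_add, ih, sum_range_succ]
    congr 3
    push_cast
    ring

theorem riemannSum_one (s t : ℝ) : riemannSum P 1 s t = P s t := by
  simp [riemannSum, gridSum]

theorem riemannSum_add {a b : ℕ} (ha : a ≠ 0) (hb : b ≠ 0) {s u t : ℝ}
    (hu : (a + b) * (u - s) = a * (t - s)) :
    riemannSum P (a + b) s t = riemannSum P a s u + riemannSum P b u t := by
  have ha' : (a : ℝ) ≠ 0 := by exact_mod_cast ha
  have hb' : (b : ℝ) ≠ 0 := by exact_mod_cast hb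
  have hab : (a : ℝ) + b ≠ 0 := by positivity
  have h₁ : (u - s) / a = (t - s) / (a + b) := by
    field_simp; linarith
  have h₂ : (t - u) / b = (t - s) / (a + b) := by
    field_simp; linarith
  have h₃ : s + a * ((t - s) / (a + b)) = u := by
    field_simp; linarith
  simp only [riemannSum, h₁, h₂, gridSum_add, h₃, Nat.cast_add]

theorem sub_gridSum_eq_sum_coboundary (x h : ℝ) (n : ℕ) :
    P x (x + (n + 1) * h) - gridSum P x h (n + 1) =
      ∑ i ∈ range n, coboundary P x (x + (i + 1) * h) (x + (i + 2) * h) := by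
  induction n with
  | zero => simp [gridSum]
  | succ n ih =>
    rw [sum_range_succ, ← ih, gridSum, sum_range_succ, ← gridSum, coboundary]
    push_cast
    ring_nf

theorem rpow_mul_rpow_sub {a z : ℝ} (ha : 0 ≤ a) (hz : z ≠ 0) (ρ : ℝ) :
    a ^ ρ * a ^ (z - ρ) = a ^ z := by
  rw [← Real.rpow_add' ha (by simpa using hz), add_sub_cancel]

theorem two_pow_mul_abs_div_two_pow_rpow (a z : ℝ) (k : ℕ) :
    2 ^ k * |a / 2 ^ k| ^ z = |a| ^ z * (2 / 2 ^ z) ^ k := by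
  rw [abs_div, abs_of_pos (by positivity : (0 : ℝ) < 2 ^ k),
    Real.div_rpow (abs_nonneg a) (by positivity), ← Real.rpow_pow_comm zero_le_two, div_pow]
  field_simp

variable {M ρ z : ℝ}

theorem abs_sub_gridSum_le (hb : CoboundaryBounded P M ρ z) (hz : z ≠ 0) (x h : ℝ) (n : ℕ) :
    |P x (x + (n + 1) * h) - gridSum P x h (n + 1)| ≤
      (∑ i ∈ range n, ((i : ℝ) + 1) ^ ρ) * M * |h| ^ z := by
  rw [sub_gridSum_eq_sum_coboundary, sum_mul, sum_mul]
  refine (abs_sum_le_sum_abs _ _).trans (sum_le_sum fun i _ => ?_)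
  have hi : (0 : ℝ) ≤ i + 1 := by positivity
  calc |coboundary P x (x + (i + 1) * h) (x + (i + 2) * h)|
      ≤ M * |(i + 1) * h| ^ ρ * |h| ^ (z - ρ) := by
        convert hb x (x + (i + 1) * h) (x + (i + 2) * h) using 4 <;> ring_nf
    _ = ((i : ℝ) + 1) ^ ρ * M * |h| ^ z := by
        rw [abs_mul, abs_of_nonneg hi, Real.mul_rpow hi (abs_nonneg h), ←
          rpow_mul_rpow_sub (abs_nonneg h) hz ρ]
        ring

theorem abs_gridSum_sub_gridSum_mul_le (hb : CoboundaryBounded P M ρ z) (hz : z ≠ 0)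
    (x h : ℝ) (n m : ℕ) :
    |gridSum P x ((m + 1) * h) n - gridSum P x h (n * (m + 1))| ≤
      n * ((∑ i ∈ range m, ((i : ℝ) + 1) ^ ρ) * M * |h| ^ z) := by
  rw [gridSum_mul, gridSum, ← sum_sub_distrib]
  calc _ ≤ _ := abs_sum_le_sum_abs _ _
    _ ≤ ∑ _a ∈ range n, (∑ i ∈ range m, ((i : ℝ) + 1) ^ ρ) * M * |h| ^ z :=
      sum_le_sum fun a _ => by
        push_cast
        rw [show x + (a + 1) * ((m + 1) * h) = x + a * ((m + 1) * h) + (m + 1) * h by ring]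
        exact abs_sub_gridSum_le hb hz _ h m
    _ = _ := by simp

theorem abs_riemannSum_two_pow_sub_mul_le (hb : CoboundaryBounded P M ρ z) (hz : z ≠ 0)
    (s t : ℝ) (k m : ℕ) :
    |riemannSum P (2 ^ k) s t - riemannSum P (2 ^ k * (m + 1)) s t| ≤
      (∑ i ∈ range m, ((i : ℝ) + 1) ^ ρ) * M * |(t - s) / (m + 1)| ^ z *
        (2 / 2 ^ z) ^ k := by
  have h := abs_gridSum_sub_gridSum_mul_le hb hz s ((t - s) / (m + 1) / 2 ^ k) (2 ^ k) m
  have hm : (m : ℝ) + 1 ≠ 0 := by positivity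
  have hstep : ((m : ℝ) + 1) * ((t - s) / (m + 1) / 2 ^ k) = (t - s) / 2 ^ k := by
    field_simp
  rw [hstep, Nat.cast_pow, Nat.cast_ofNat] at h
  convert h using 1
  · simp only [riemannSum]
    push_cast
    rw [div_div, mul_comm ((m : ℝ) + 1)]
  · rw [mul_left_comm, two_pow_mul_abs_div_two_pow_rpow]
    ring

noncomputable def sew (P : ℝ → ℝ → ℝ) (s t : ℝ) : ℝ :=
  limUnder atTop fun k : ℕ => riemannSum P (2 ^ k) s t

theorem two_lt_two_rpow (hz : 1 < z) : (2 : ℝ) < 2 ^ z := by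
  simpa using Real.rpow_lt_rpow_of_exponent_lt one_lt_two hz

theorem two_div_two_rpow_lt_one (hz : 1 < z) : 2 / (2 : ℝ) ^ z < 1 :=
  (div_lt_one (by positivity)).2 (two_lt_two_rpow hz)

theorem dist_riemannSum_two_pow_succ_le (hb : CoboundaryBounded P M ρ z) (hz : z ≠ 0)
    (s t : ℝ) (k : ℕ) :
    dist (riemannSum P (2 ^ k) s t) (riemannSum P (2 ^ (k + 1)) s t) ≤
      M * |(t - s) / 2| ^ z * (2 / 2 ^ z) ^ k := by
  have h := abs_riemannSum_two_pow_sub_mul_le hb hz s t k 1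
  norm_num at h
  rwa [Real.dist_eq, pow_succ]

theorem tendsto_riemannSum_two_pow_sew (hb : CoboundaryBounded P M ρ z) (hz : 1 < z)
    (s t : ℝ) : Tendsto (fun k => riemannSum P (2 ^ k) s t) atTop (𝓝 (sew P s t)) :=
  (cauchySeq_of_le_geometric _ _ (two_div_two_rpow_lt_one hz)
    (dist_riemannSum_two_pow_succ_le hb (by linarith) s t)).tendsto_limUnder

theorem abs_riemannSum_two_pow_sub_sew_le (hb : CoboundaryBounded P M ρ z) (hz : 1 < z)
    (s t : ℝ) (k : ℕ) :
    |riemannSum P (2 ^ k) s t - sew P s t| ≤ M / (2 ^ z - 2) * |t - s| ^ z * (2 / 2 ^ z) ^ k := by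
  have h := dist_le_of_le_geometric_of_tendsto _ _ (two_div_two_rpow_lt_one hz)
    (dist_riemannSum_two_pow_succ_le hb (by linarith) s t)
    (tendsto_riemannSum_two_pow_sew hb hz s t) k
  have h2z := two_lt_two_rpow hz
  rw [Real.dist_eq, abs_div, abs_two, Real.div_rpow (abs_nonneg _) zero_le_two] at h
  convert h using 1
  field_simp

theorem abs_sub_sew_le (hb : CoboundaryBounded P M ρ z) (hz : 1 < z) (s t : ℝ) :
    |P s t - sew P s t| ≤ M / (2 ^ z - 2) * |t - s| ^ z := by
  simpa [riemannSum_one] using abs_riemannSum_two_pow_sub_sew_le hb hz s t 0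

theorem tendsto_riemannSum_two_pow_mul_sew (hb : CoboundaryBounded P M ρ z) (hz : 1 < z)
    (s t : ℝ) {n : ℕ} (hn : n ≠ 0) :
    Tendsto (fun k => riemannSum P (2 ^ k * n) s t) atTop (𝓝 (sew P s t)) := by
  obtain ⟨m, rfl⟩ := Nat.exists_eq_succ_of_ne_zero hn
  have hw := tendsto_pow_atTop_nhds_zero_of_lt_one (by positivity) (two_div_two_rpow_lt_one hz)
  have h0 : Tendsto (fun k => riemannSum P (2 ^ k) s t - riemannSum P (2 ^ k * (m + 1)) s t)
      atTop (𝓝 0) :=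
    squeeze_zero_norm (abs_riemannSum_two_pow_sub_mul_le hb (by linarith) s t · m)
      (by simpa using hw.const_mul _)
  simpa using (tendsto_riemannSum_two_pow_sew hb hz s t).sub h0

theorem sew_eq_add_of_mul_sub_eq (hb : CoboundaryBounded P M ρ z) (hz : 1 < z) {p q : ℕ}
    (hp : p ≠ 0) (hq : q ≠ 0) {s u t : ℝ} (hu : (p + q) * (u - s) = p * (t - s)) :
    sew P s t = sew P s u + sew P u t := by
  have hsplit (k : ℕ) : riemannSum P (2 ^ k * (p + q)) s t =
      riemannSum P (2 ^ k * p) s u + riemannSum P (2 ^ k * q) u t := by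
    rw [mul_add]
    exact riemannSum_add (by positivity) (by positivity)
      (by push_cast; linear_combination (2 : ℝ) ^ k * hu)
  refine tendsto_nhds_unique
    (tendsto_riemannSum_two_pow_mul_sew hb hz s t (n := p + q) (by omega)) ?_
  exact ((tendsto_riemannSum_two_pow_mul_sew hb hz s u hp).add
    (tendsto_riemannSum_two_pow_mul_sew hb hz u t hq)).congr fun k => (hsplit k).symm

theorem continuous_sub_riemannSum
    (hcont : Continuous fun p : ℝ × ℝ × ℝ => coboundary P p.1 p.2.1 p.2.2)
    {n : ℕ} (hn : n ≠ 0) :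
    Continuous fun p : ℝ × ℝ => P p.1 p.2 - riemannSum P n p.1 p.2 := by
  obtain ⟨m, rfl⟩ := Nat.exists_eq_succ_of_ne_zero hn
  have h (s t : ℝ) : P s t - riemannSum P (m + 1) s t = ∑ i ∈ range m, coboundary P s
      (s + (i + 1) * ((t - s) / (m + 1))) (s + (i + 2) * ((t - s) / (m + 1))) := by
    rw [riemannSum, ← sub_gridSum_eq_sum_coboundary]
    push_cast
    congr 2
    field_simp
    ring
  simp only [Nat.succ_eq_add_one, h]
  exact continuous_finsetSum _ fun i _ => hcont.comp (f := fun p : ℝ × ℝ =>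
    (p.1, p.1 + (i + 1) * ((p.2 - p.1) / (m + 1)), p.1 + (i + 2) * ((p.2 - p.1) / (m + 1))))
    (by fun_prop)

theorem continuous_sub_sew (hM : 0 ≤ M) (hb : CoboundaryBounded P M ρ z) (hz : 1 < z)
    (hcont : Continuous fun p : ℝ × ℝ × ℝ => coboundary P p.1 p.2.1 p.2.2) :
    Continuous fun p : ℝ × ℝ => P p.1 p.2 - sew P p.1 p.2 := by
  refine TendstoLocallyUniformly.continuous (p := atTop)
    (F := fun k (p : ℝ × ℝ) => P p.1 p.2 - riemannSum P (2 ^ k) p.1 p.2) ?_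
    (Frequently.of_forall fun k => continuous_sub_riemannSum hcont (by positivity))
  rw [Metric.tendstoLocallyUniformly_iff]
  intro ε hε x
  set B := |x.2 - x.1| + 1
  have hC : 0 ≤ M / (2 ^ z - 2) := div_nonneg hM (by linarith [two_lt_two_rpow hz])
  have hw := (tendsto_pow_atTop_nhds_zero_of_lt_one (by positivity)
    (two_div_two_rpow_lt_one hz)).const_mul (M / (2 ^ z - 2) * B ^ z)
  rw [mul_zero] at hw
  refine ⟨{p | |p.2 - p.1| < B},
    (isOpen_lt (by fun_prop) continuous_const).mem_nhds (by simp [B]), ?_⟩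
  filter_upwards [hw.eventually (gt_mem_nhds hε)] with k hk p hp
  rw [Real.dist_eq, sub_sub_sub_cancel_left]
  calc |riemannSum P (2 ^ k) p.1 p.2 - sew P p.1 p.2|
      ≤ M / (2 ^ z - 2) * |p.2 - p.1| ^ z * (2 / 2 ^ z) ^ k :=
        abs_riemannSum_two_pow_sub_sew_le hb hz p.1 p.2 k
    _ ≤ M / (2 ^ z - 2) * B ^ z * (2 / 2 ^ z) ^ k := by gcongr
    _ < ε := hk

theorem sew_add_sew_of_rat (hb : CoboundaryBounded P M ρ z) (hz : 1 < z) (s t : ℝ) {r : ℚ}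
    (h0 : 0 < r) (h1 : r < 1) :
    sew P s (s + r * (t - s)) + sew P (s + r * (t - s)) t = sew P s t := by
  obtain ⟨p, hp⟩ : ∃ p : ℕ, (p : ℤ) = r.num :=
    ⟨r.num.toNat, Int.toNat_of_nonneg (Rat.num_pos.2 h0).le⟩
  have hpd : p < r.den := by have := Rat.num_lt_denom_iff.2 h1; omega
  have hp0 : p ≠ 0 := by have := Rat.num_pos.2 h0; omega
  refine (sew_eq_add_of_mul_sub_eq hb hz hp0 (q := r.den - p) (by omega) ?_).symm
  have hden : ((p : ℝ) + (r.den - p : ℕ)) = r.den := by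
    rw [Nat.cast_sub hpd.le]
    ring
  rw [hden, Rat.cast_def, ← hp]
  push_cast
  field_simp
  ring

theorem eq_zero_of_continuous_of_rat {f : ℝ → ℝ} (hf : Continuous f)
    (h : ∀ r : ℚ, 0 < r → r < 1 → f r = 0) {θ : ℝ} (hθ : θ ∈ Set.Icc (0 : ℝ) 1) :
    f θ = 0 := by
  have hdense :
      Set.Icc (0 : ℝ) 1 ⊆ closure (Set.Ioo 0 1 ∩ Set.range ((↑) : ℚ → ℝ)) := by
    rw [← closure_Ioo zero_ne_one]
    exact closure_minimal (Rat.denseRange_cast.open_subset_closure_inter isOpen_Ioo)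
      isClosed_closure
  have hzero : closure (Set.Ioo 0 1 ∩ Set.range ((↑) : ℚ → ℝ)) ⊆ f ⁻¹' {0} := by
    refine closure_minimal ?_ (isClosed_singleton.preimage hf)
    rintro _ ⟨⟨h0, h1⟩, r, rfl⟩
    exact h r (by exact_mod_cast h0) (by exact_mod_cast h1)
  exact hzero (hdense hθ)

theorem sew_add_sew_of_mem_uIcc (hM : 0 ≤ M) (hb : CoboundaryBounded P M ρ z) (hz : 1 < z)
    (hcont : Continuous fun p : ℝ × ℝ × ℝ => coboundary P p.1 p.2.1 p.2.2) {s u t : ℝ}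
    (hu : u ∈ Set.uIcc s t) : sew P s u + sew P u t = sew P s t := by
  rw [← segment_eq_uIcc, segment_eq_image'] at hu
  obtain ⟨θ, hθ, rfl⟩ := hu
  set R : ℝ × ℝ → ℝ := fun p => P p.1 p.2 - sew P p.1 p.2
  have hR : Continuous R := continuous_sub_sew hM hb hz hcont
  have hdefect (θ : ℝ) : sew P s (s + θ * (t - s)) + sew P (s + θ * (t - s)) t - sew P s t =
      R (s, t) - R (s, s + θ * (t - s)) - R (s + θ * (t - s), t) -
        coboundary P s (s + θ * (t - s)) t := by
    simp only [R, coboundary]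
    ring
  have hcont_defect : Continuous fun θ : ℝ =>
      sew P s (s + θ * (t - s)) + sew P (s + θ * (t - s)) t - sew P s t := by
    simp only [hdefect]
    refine ((continuous_const.sub (hR.comp ?_)).sub (hR.comp ?_)).sub
      (hcont.comp (f := fun θ : ℝ => (s, s + θ * (t - s), t)) ?_) <;> fun_prop
  refine sub_eq_zero.1 (eq_zero_of_continuous_of_rat hcont_defect (fun r h0 h1 => ?_) hθ)
  exact sub_eq_zero.2 (sew_add_sew_of_rat hb hz s t h0 h1)

theorem eq_zero_of_add_midpoint {K : ℝ} (hz : 1 < z) {F : ℝ → ℝ → ℝ}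
    (hF : ∀ s t, F s t = F s ((s + t) / 2) + F ((s + t) / 2) t)
    (hK : ∀ s t, |F s t| ≤ K * |t - s| ^ z) (s t : ℝ) : F s t = 0 := by
  have hbound (k : ℕ) : ∀ s t, |F s t| ≤ K * |t - s| ^ z * (2 / 2 ^ z) ^ k := by
    induction k with
    | zero => simpa using hK
    | succ k ih =>
      intro s t
      have h₁ := ih s ((s + t) / 2)
      have h₂ := ih ((s + t) / 2) t
      rw [show (s + t) / 2 - s = (t - s) / 2 by ring, abs_div, abs_two] at h₁
      rw [show t - (s + t) / 2 = (t - s) / 2 by ring, abs_div, abs_two] at h₂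
      calc |F s t| ≤ |F s ((s + t) / 2)| + |F ((s + t) / 2) t| := hF s t ▸ abs_add_le _ _
        _ ≤ 2 * (K * (|t - s| / 2) ^ z * (2 / 2 ^ z) ^ k) := by linarith
        _ = K * |t - s| ^ z * (2 / 2 ^ z) ^ (k + 1) := by
          rw [Real.div_rpow (abs_nonneg _) zero_le_two, pow_succ]
          ring
  have hw := (tendsto_pow_atTop_nhds_zero_of_lt_one (by positivity)
    (two_div_two_rpow_lt_one hz)).const_mul (K * |t - s| ^ z)
  rw [mul_zero] at hw
  exact abs_nonpos_iff.1 (ge_of_tendsto' hw fun k => hbound k s t)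

theorem midpoint_mem_uIcc (s t : ℝ) : (s + t) / 2 ∈ Set.uIcc s t := by
  simp only [Set.mem_uIcc]
  grind

theorem sew_add_sew_swap (hM : 0 ≤ M) (hb : CoboundaryBounded P M ρ z) (hz : 1 < z)
    (hcont : Continuous fun p : ℝ × ℝ × ℝ => coboundary P p.1 p.2.1 p.2.2)
    (hPdiag : ∀ a, P a a = 0) (s t : ℝ) : sew P s t + sew P t s = 0 := by
  refine eq_zero_of_add_midpoint hz (F := fun s t => sew P s t + sew P t s)
    (K := M + 2 * (M / (2 ^ z - 2))) (fun s t => ?_) (fun s t => ?_) s t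
  · have h₁ := sew_add_sew_of_mem_uIcc hM hb hz hcont (midpoint_mem_uIcc s t)
    have h₂ := sew_add_sew_of_mem_uIcc hM hb hz hcont (add_comm s t ▸ midpoint_mem_uIcc t s)
    linarith
  · have hcob : |coboundary P s t s| ≤ M * |t - s| ^ z := by
      have := hb s t s
      rwa [abs_sub_comm s t, mul_assoc, rpow_mul_rpow_sub (abs_nonneg _) (by linarith)] at this
    have hst := abs_sub_sew_le hb hz s t
    have hts := abs_sub_sew_le hb hz t s
    rw [abs_sub_comm s t] at hts
    have e : sew P s t + sew P t s =
        -(coboundary P s t s + (P s t - sew P s t) + (P t s - sew P t s)) := by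
      simp only [coboundary, hPdiag]
      ring
    calc |sew P s t + sew P t s|
        ≤ |coboundary P s t s| + |P s t - sew P s t| + |P t s - sew P t s| := by
          rw [e, abs_neg]
          exact abs_add_three _ _ _
      _ ≤ (M + 2 * (M / (2 ^ z - 2))) * |t - s| ^ z := by linarith

theorem sew_add_sew (hM : 0 ≤ M) (hb : CoboundaryBounded P M ρ z) (hz : 1 < z)
    (hcont : Continuous fun p : ℝ × ℝ × ℝ => coboundary P p.1 p.2.1 p.2.2)
    (hPdiag : ∀ a, P a a = 0) (s u t : ℝ) : sew P s u + sew P u t = sew P s t := by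
  have hswap := sew_add_sew_swap hM hb hz hcont hPdiag
  have hsplit : u ∈ Set.uIcc s t ∨ s ∈ Set.uIcc u t ∨ t ∈ Set.uIcc s u := by
    simp only [Set.mem_uIcc]
    grind
  rcases hsplit with h | h | h
  · exact sew_add_sew_of_mem_uIcc hM hb hz hcont h
  · linarith [sew_add_sew_of_mem_uIcc hM hb hz hcont h, hswap s u]
  · linarith [sew_add_sew_of_mem_uIcc hM hb hz hcont h, hswap t u]

end Sewing

theorem sewing_lemma_general (z M ρ : ℝ) (hz : 1 < z) (hM : 0 ≤ M)
    (A : ℝ → ℝ → ℝ → ℝ)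
    (hcont : Continuous fun p : ℝ × ℝ × ℝ => A p.1 p.2.1 p.2.2)
    (hdiag : ∀ t : ℝ, A t t t = 0)
    (himage : ∃ P : ℝ → ℝ → ℝ, ∀ s u t : ℝ, A s u t = P s t - P u t - P s u)
    (hbound : ∀ s u t : ℝ, |A s u t| ≤ M * |u - s| ^ ρ * |t - u| ^ (z - ρ)) :
    (∃ R : ℝ → ℝ → ℝ,
        (∀ s t : ℝ, |R s t| ≤ M / ((2 : ℝ) ^ z - 2) * |t - s| ^ z) ∧
        (∀ s u t : ℝ, A s u t = R s t - R u t - R s u)) ∧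
    (∀ R R' : ℝ → ℝ → ℝ,
        (∃ K, ∀ s t : ℝ, |R s t| ≤ K * |t - s| ^ z) →
        (∃ K, ∀ s t : ℝ, |R' s t| ≤ K * |t - s| ^ z) →
        (∀ s u t : ℝ, A s u t = R s t - R u t - R s u) →
        (∀ s u t : ℝ, A s u t = R' s t - R' u t - R' s u) →
        R = R') := by
  obtain ⟨P, hP⟩ := himage
  obtain rfl : A = Sewing.coboundary P := funext₃ hP
  have hPdiag (a : ℝ) : P a a = 0 := by simpa [Sewing.coboundary] using hdiag a
  refine ⟨⟨fun s t => P s t - Sewing.sew P s t, Sewing.abs_sub_sew_le hbound hz,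
    fun s u t => ?_⟩, ?_⟩
  · have := Sewing.sew_add_sew hM hbound hz hcont hPdiag s u t
    simp only [Sewing.coboundary]
    linarith
  rintro R R' ⟨K, hK⟩ ⟨K', hK'⟩ hR hR'
  funext s t
  refine sub_eq_zero.1 (Sewing.eq_zero_of_add_midpoint hz (F := fun s t => R s t - R' s t)
    (K := K + K') (fun s t => ?_) (fun s t => ?_) s t)
  · linarith [hR s ((s + t) / 2) t, hR' s ((s + t) / 2) t]
  · calc |R s t - R' s t| ≤ |R s t| + |R' s t| := abs_sub _ _
      _ ≤ (K + K') * |t - s| ^ z := by linarith [hK s t, hK' s t]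

/-- The sewing lemma (existence and uniqueness of `Λ`): if `z > 1` and
`A : ℝ³ → ℝ` is continuous, vanishing on the diagonal, lies in the image of `N`,
and satisfies `|A_{sut}| ≤ M |u-s|^ρ |t-u|^{z-ρ}` for some `0 < ρ < z`, then there
is a unique `R ∈ ΩC^z` with `N R = A`, and `‖R‖_z ≤ M / (2^z - 2)`. -/
theorem sewing_lemma (z M ρ : ℝ) (hz : 1 < z) (hρ0 : 0 < ρ) (hρz : ρ < z) (hM : 0 ≤ M)
    (A : ℝ → ℝ → ℝ → ℝ)
    (hcont : Continuous fun p : ℝ × ℝ × ℝ => A p.1 p.2.1 p.2.2)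
    (hdiag : ∀ t : ℝ, A t t t = 0)
    (himage : ∃ P : ℝ → ℝ → ℝ, ∀ s u t : ℝ, A s u t = P s t - P u t - P s u)
    (hbound : ∀ s u t : ℝ, |A s u t| ≤ M * |u - s| ^ ρ * |t - u| ^ (z - ρ)) :
    (∃ R : ℝ → ℝ → ℝ,
        (∀ s t : ℝ, |R s t| ≤ M / ((2 : ℝ) ^ z - 2) * |t - s| ^ z) ∧
        (∀ s u t : ℝ, A s u t = R s t - R u t - R s u)) ∧
    (∀ R R' : ℝ → ℝ → ℝ,
        (∃ K, ∀ s t : ℝ, |R s t| ≤ K * |t - s| ^ z) →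
        (∃ K, ∀ s t : ℝ, |R' s t| ≤ K * |t - s| ^ z) →
        (∀ s u t : ℝ, A s u t = R s t - R u t - R s u) →
        (∀ s u t : ℝ, A s u t = R' s t - R' u t - R' s u) →
        R = R') :=
  sewing_lemma_general z M ρ hz hM A hcont hdiag himage hbound
end

section
/- (Uniqueness half of the sewing lemma, with the bound) If z > 1, R ∈ ΩC^z, and A = NR satisfies A = Σᵢ Aᵢ with Aᵢ ∈ ΩC₂^{ρᵢ, z-ρᵢ}, 0 < ρᵢ < z, then ‖R‖_z ≤ (1/(2^z - 2)) Σᵢ ‖Aᵢ‖_{ρᵢ, z-ρᵢ}. (Proof by dyadic midpoint splitting: R_{st} = R_{ut} + R_{su} + A_{sut} with u the midpoint of [s,t].) -/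
open Finset Filter Topology

/-!
Splitting `[s, t]` at its midpoint `u` gives `R s t = R u t + R s u + ∑ᵢ Aᵢ s u t`, and each `Aᵢ s u t`
is at most `Mᵢ |t - s|^z / 2^z`. Hence any constant `C` with `|R s t| ≤ C |t - s|^z` can be improved to
`(2C + ∑ᵢ Mᵢ) / 2^z`. Since `z > 1` this map is a contraction with fixed point `∑ᵢ Mᵢ / (2^z - 2)`,
and iterating it from the a priori constant `K` converges to that fixed point.
-/

def HasRpowBound (R : ℝ → ℝ → ℝ) (z C : ℝ) : Prop :=
  ∀ s t : ℝ, |R s t| ≤ C * |t - s| ^ z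

theorem le_of_forall_le_add_mul_pow {x L c q : ℝ} (hq₀ : 0 ≤ q) (hq₁ : q < 1)
    (h : ∀ m : ℕ, x ≤ L + c * q ^ m) : x ≤ L := by
  have hlim : Tendsto (fun m : ℕ => L + c * q ^ m) atTop (𝓝 (L + c * 0)) :=
    tendsto_const_nhds.add ((tendsto_pow_atTop_nhds_zero_of_lt_one hq₀ hq₁).const_mul c)
  simpa using ge_of_tendsto hlim (Eventually.of_forall h)

theorem abs_midpoint_sub (s t : ℝ) :
    |(s + t) / 2 - s| = |t - s| / 2 ∧ |t - (s + t) / 2| = |t - s| / 2 := by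
  constructor <;> rw [← abs_two, ← abs_div] <;> ring_nf

namespace HasRpowBound

variable {R : ℝ → ℝ → ℝ} {z B C K : ℝ}

theorem midpoint_step (hmid : ∀ s t : ℝ,
      |R s t - R ((s + t) / 2) t - R s ((s + t) / 2)| ≤ B * (|t - s| / 2) ^ z)
    (hC : HasRpowBound R z C) : HasRpowBound R z ((2 * C + B) / 2 ^ z) := by
  intro s t
  obtain ⟨hsu, hut⟩ := abs_midpoint_sub s t
  set u := (s + t) / 2
  have hhalf : (|t - s| / 2) ^ z = |t - s| ^ z / 2 ^ z :=
    Real.div_rpow (abs_nonneg _) zero_le_two z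
  calc |R s t| = |R u t + R s u + (R s t - R u t - R s u)| := by ring_nf
    _ ≤ |R u t| + |R s u| + |R s t - R u t - R s u| := abs_add_three _ _ _
    _ ≤ C * (|t - s| / 2) ^ z + C * (|t - s| / 2) ^ z + B * (|t - s| / 2) ^ z := by
        gcongr
        · simpa only [hut] using hC u t
        · simpa only [hsu] using hC s u
        · exact hmid s t
    _ = (2 * C + B) / 2 ^ z * |t - s| ^ z := by rw [hhalf]; ring

theorem of_midpoint (hz : 1 < z) (hK : HasRpowBound R z K) (hmid : ∀ s t : ℝ,
      |R s t - R ((s + t) / 2) t - R s ((s + t) / 2)| ≤ B * (|t - s| / 2) ^ z) :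
    HasRpowBound R z (B / (2 ^ z - 2)) := by
  have h2z : (2 : ℝ) < 2 ^ z := by
    simpa using Real.rpow_lt_rpow_of_exponent_lt one_lt_two hz
  have h2z₀ : (0 : ℝ) < 2 ^ z := by positivity
  set L := B / (2 ^ z - 2)
  set q := 2 / (2 : ℝ) ^ z
  have hL : L * (2 ^ z - 2) = B := div_mul_cancel₀ B (sub_pos.2 h2z).ne'
  have hq : q * 2 ^ z = 2 := div_mul_cancel₀ 2 h2z₀.ne'
  have hq₀ : 0 ≤ q := by positivity
  have hq₁ : q < 1 := (div_lt_one h2z₀).2 h2z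
  have hiter : ∀ m : ℕ, HasRpowBound R z (L + (K - L) * q ^ m) := by
    intro m
    induction m with
    | zero => simpa using hK
    | succ m ih =>
      convert ih.midpoint_step hmid using 1
      rw [eq_div_iff h2z₀.ne']
      linear_combination (K - L) * q ^ m * hq + hL
  intro s t
  refine le_of_forall_le_add_mul_pow (c := (K - L) * |t - s| ^ z) hq₀ hq₁ fun m => ?_
  exact (hiter m s t).trans_eq (by ring)

end HasRpowBound

theorem abs_sum_le_of_midpoint {z : ℝ} (hz : z ≠ 0) {n : ℕ} (ρ M : Fin n → ℝ)
    (A : Fin n → ℝ → ℝ → ℝ → ℝ)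
    (hA : ∀ (i : Fin n) (s u t : ℝ), |A i s u t| ≤ M i * |u - s| ^ (ρ i) * |t - u| ^ (z - ρ i))
    (s t : ℝ) :
    |∑ i, A i s ((s + t) / 2) t| ≤ (∑ i, M i) * (|t - s| / 2) ^ z := by
  obtain ⟨hsu, hut⟩ := abs_midpoint_sub s t
  have hsplit (i : Fin n) :
      (|t - s| / 2) ^ ρ i * (|t - s| / 2) ^ (z - ρ i) = (|t - s| / 2) ^ z := by
    rw [← Real.rpow_add' (by positivity) (by simpa using hz), add_sub_cancel]
  calc |∑ i, A i s ((s + t) / 2) t| ≤ ∑ i, |A i s ((s + t) / 2) t| := abs_sum_le_sum_abs _ _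
    _ ≤ ∑ i, M i * (|t - s| / 2) ^ z := by
        gcongr with i
        simpa only [hsu, hut, mul_assoc, hsplit] using hA i s ((s + t) / 2) t
    _ = (∑ i, M i) * (|t - s| / 2) ^ z := (sum_mul _ _ _).symm

theorem sewing_uniqueness_bound_general (z : ℝ) (hz : 1 < z) (n : ℕ)
    (ρ M : Fin n → ℝ) (A : Fin n → ℝ → ℝ → ℝ → ℝ)
    (hA : ∀ (i : Fin n) (s u t : ℝ),
        |A i s u t| ≤ M i * |u - s| ^ (ρ i) * |t - u| ^ (z - ρ i))
    (R : ℝ → ℝ → ℝ) (K : ℝ)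
    (hR : ∀ s t : ℝ, |R s t| ≤ K * |t - s| ^ z)
    (hNR : ∀ s u t : ℝ, R s t - R u t - R s u = ∑ i, A i s u t) :
    ∀ s t : ℝ, |R s t| ≤ (1 / ((2 : ℝ) ^ z - 2)) * (∑ i, M i) * |t - s| ^ z := by
  have hmid (s t : ℝ) :
      |R s t - R ((s + t) / 2) t - R s ((s + t) / 2)| ≤ (∑ i, M i) * (|t - s| / 2) ^ z := by
    rw [hNR]
    exact abs_sum_le_of_midpoint (zero_lt_one.trans hz).ne' ρ M A hA s t
  intro s t
  simpa only [one_div_mul_eq_div] using HasRpowBound.of_midpoint hz hR hmid s t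

/-- Uniqueness half of the sewing lemma with the quantitative bound: if `z > 1`,
`R ∈ ΩC^z` and `N R = ∑ᵢ Aᵢ` with `Aᵢ ∈ ΩC₂^{ρᵢ, z-ρᵢ}`, `0 < ρᵢ < z`, then
`‖R‖_z ≤ (1/(2^z - 2)) ∑ᵢ ‖Aᵢ‖_{ρᵢ, z-ρᵢ}`. -/
theorem sewing_uniqueness_bound (z : ℝ) (hz : 1 < z) (n : ℕ)
    (ρ M : Fin n → ℝ) (A : Fin n → ℝ → ℝ → ℝ → ℝ)
    (hρ : ∀ i, 0 < ρ i ∧ ρ i < z) (hM : ∀ i, 0 ≤ M i)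
    (hA : ∀ (i : Fin n) (s u t : ℝ),
        |A i s u t| ≤ M i * |u - s| ^ (ρ i) * |t - u| ^ (z - ρ i))
    (R : ℝ → ℝ → ℝ) (K : ℝ)
    (hR : ∀ s t : ℝ, |R s t| ≤ K * |t - s| ^ z)
    (hNR : ∀ s u t : ℝ, R s t - R u t - R s u = ∑ i, A i s u t) :
    ∀ s t : ℝ, |R s t| ≤ (1 / ((2 : ℝ) ^ z - 2)) * (∑ i, M i) * |t - s| ^ z :=
  sewing_uniqueness_bound_general z hz n ρ M A hA R K hR hNR
end

section
/- (Locality of Λ) Let z > 1 and let Λ be the inverse of N on Z₂^z := N(ΩC) ∩ ΩC₂^z guaranteed by the sewing lemma. If I ⊂ ℝ is an interval and A, B ∈ Z₂^z agree on I³, then ΛA and ΛB agree on I². Equivalently, if Q ∈ ΩC^z with z > 1 satisfies (NQ)_{sut} = 0 for all s,u,t ∈ I, then Q vanishes on I². -/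
/-- Locality of `Λ`: if `z > 1`, `R, R' ∈ ΩC^z` and `N R = N R'` on `I³` for an
interval `I`, then `R = R'` on `I²`. (Equivalently, `Q ∈ ΩC^z` with `N Q = 0` on
`I³` vanishes on `I²`.) -/
theorem locality_of_Lambda (z : ℝ) (hz : 1 < z) (I : Set ℝ) (hI : I.OrdConnected)
    (R R' : ℝ → ℝ → ℝ)
    (hR : ∃ K, ∀ s t : ℝ, |R s t| ≤ K * |t - s| ^ z)
    (hR' : ∃ K, ∀ s t : ℝ, |R' s t| ≤ K * |t - s| ^ z)
    (hagree : ∀ s ∈ I, ∀ u ∈ I, ∀ t ∈ I,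
        R s t - R u t - R s u = R' s t - R' u t - R' s u) :
    ∀ s ∈ I, ∀ t ∈ I, R s t = R' s t := by
  obtain ⟨K1, hK1⟩ := hR
  obtain ⟨K2, hK2⟩ := hR'
  set Q : ℝ → ℝ → ℝ := fun s t => R s t - R' s t with hQ
  set K : ℝ := K1 + K2 with hK
  have hQbound : ∀ s t : ℝ, |Q s t| ≤ K * |t - s| ^ z := by
    intro s t
    calc |Q s t| ≤ |R s t| + |R' s t| := abs_sub _ _
    _ ≤ K1 * |t - s| ^ z + K2 * |t - s| ^ z := add_le_add (hK1 s t) (hK2 s t)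
    _ = K * |t - s| ^ z := by ring
  have hadd : ∀ s ∈ I, ∀ u ∈ I, ∀ t ∈ I, Q s t = Q s u + Q u t := by
    intro s hs u hu t ht
    have := hagree s hs u hu t ht
    simp only [hQ]
    linarith
  set c : ℝ := 2 ^ (1 - z) with hc
  have hc0 : 0 < c := Real.rpow_pos_of_pos (by norm_num) _
  have hc1 : c < 1 := Real.rpow_lt_one_of_one_lt_of_neg (by norm_num) (by linarith)
  -- key induction
  have key : ∀ n : ℕ, ∀ s ∈ I, ∀ t ∈ I, |Q s t| ≤ c ^ n * (K * |t - s| ^ z) := by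
    intro n
    induction n with
    | zero => intro s hs t ht; simpa using hQbound s t
    | succ n ih =>
      intro s hs t ht
      set m : ℝ := (s + t) / 2 with hm
      have hmI : m ∈ I := by
        apply hI.uIcc_subset hs ht
        rcases le_total s t with h | h
        · rw [Set.uIcc_of_le h]; constructor <;> [linarith; linarith]
        · rw [Set.uIcc_of_ge h]; constructor <;> [linarith; linarith]
      have hms : |m - s| = |t - s| / 2 := by
        rw [show m - s = (t - s) / 2 by rw [hm]; ring, abs_div]
        norm_num
      have htm : |t - m| = |t - s| / 2 := by
        rw [show t - m = (t - s) / 2 by rw [hm]; ring, abs_div]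
        norm_num
      have h1 := ih s hs m hmI
      have h2 := ih m hmI t ht
      have hsplit : Q s t = Q s m + Q m t := hadd s hs m hmI t ht
      have habs : |t - s| ≥ 0 := abs_nonneg _
      have hhalf : (|t - s| / 2) ^ z = |t - s| ^ z / 2 ^ z := by
        rw [Real.div_rpow habs (by norm_num)]
      calc |Q s t| ≤ |Q s m| + |Q m t| := hsplit ▸ abs_add_le _ _
      _ ≤ c ^ n * (K * |m - s| ^ z) + c ^ n * (K * |t - m| ^ z) := add_le_add h1 h2
      _ = 2 * (c ^ n * (K * (|t - s| / 2) ^ z)) := by rw [hms, htm]; ring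
      _ = c ^ (n + 1) * (K * |t - s| ^ z) := by
          rw [hhalf, pow_succ]
          have h2z : (2 : ℝ) ^ z ≠ 0 := ne_of_gt (Real.rpow_pos_of_pos (by norm_num) _)
          have hcz : c * 2 ^ z = 2 := by
            rw [hc, ← Real.rpow_add (by norm_num), sub_add_cancel, Real.rpow_one]
          have hcz' : c = 2 * (2 ^ z)⁻¹ := (eq_mul_inv_iff_mul_eq₀ h2z).mpr hcz
          linear_combination (-(c ^ n * K * |t - s| ^ z)) * hcz'
  intro s hs t ht
  have hlim : Filter.Tendsto (fun n : ℕ => c ^ n * (K * |t - s| ^ z)) Filter.atTop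
      (nhds (0 * (K * |t - s| ^ z))) := by
    exact (tendsto_pow_atTop_nhds_zero_of_lt_one (le_of_lt hc0) hc1).mul_const _
  rw [zero_mul] at hlim
  have hle : |Q s t| ≤ 0 :=
    ge_of_tendsto hlim (Filter.Eventually.of_forall fun n => key n s hs t ht)
  have : Q s t = 0 := abs_nonpos_iff.mp hle
  simpa [hQ, sub_eq_zero] using this
end

section
/- (Young integral as limit of Riemann sums) With F ∈ C^ρ(I), X ∈ C^γ(I), γ + ρ > 1, and the Young integral defined via the sewing map, for s,t ∈ I: ∫_s^t F dX = lim_{|Π|→0} Σᵢ F_{tᵢ}(X_{t_{i+1}} - X_{tᵢ}), the limit over partitions Π = {s = t₀ < t₁ < ⋯ < t_n = t} with mesh |Π| = sup_i |t_{i+1} - t_i| → 0. Key estimate: Σᵢ |R_{tᵢ t_{i+1}}| ≤ ‖R‖_{γ+ρ} |Π|^{γ+ρ-1} |t-s| for R ∈ ΩC^{γ+ρ}. -/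
open Finset

lemma tele_sum (g : ℝ → ℝ) : ∀ (n : ℕ) (π : Fin (n + 1) → ℝ),
    ∑ i : Fin n, (g (π i.succ) - g (π i.castSucc)) = g (π (Fin.last n)) - g (π 0) := by
  intro n
  induction n with
  | zero => intro π; simp
  | succ n ih =>
    intro π
    rw [Fin.sum_univ_castSucc]
    have := ih (fun i => π i.castSucc)
    simp only [Fin.succ_castSucc] at this ⊢
    rw [this]
    simp [Fin.succ_last]


/-- The Young integral is the limit of Riemann sums: with `F ∈ C^ρ(I)`, `X ∈ C^γ(I)`,
`γ + ρ > 1`, and `A` the indefinite Young integral (characterized by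
`|δA_{st} - F_s δX_{st}| ≤ C |t-s|^{γ+ρ}`), for `s, t ∈ I`:
`∫_s^t F dX = lim_{|Π|→0} ∑ᵢ F_{tᵢ}(X_{t_{i+1}} - X_{tᵢ})` over partitions of `[s,t]`. -/
theorem young_integral_riemann_sums (I : Set ℝ) (hI : I.OrdConnected)
    (F X A : ℝ → ℝ) (γ ρ KF KX : ℝ)
    (hγ : 0 < γ) (hρ : 0 < ρ) (h1 : 1 < γ + ρ)
    (hF : ∀ s ∈ I, ∀ t ∈ I, |F t - F s| ≤ KF * |t - s| ^ ρ)
    (hX : ∀ s ∈ I, ∀ t ∈ I, |X t - X s| ≤ KX * |t - s| ^ γ)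
    (hA : ∃ C : ℝ, ∀ s ∈ I, ∀ t ∈ I,
        |(A t - A s) - F s * (X t - X s)| ≤ C * |t - s| ^ (γ + ρ))
    (s t : ℝ) (hs : s ∈ I) (ht : t ∈ I) (hst : s < t) :
    ∀ ε > (0 : ℝ), ∃ δ > (0 : ℝ), ∀ (n : ℕ) (π : Fin (n + 1) → ℝ),
      Monotone π → π 0 = s → π (Fin.last n) = t →
      (∀ i : Fin (n + 1), π i ∈ I) →
      (∀ i : Fin n, π i.succ - π i.castSucc < δ) →
      |(∑ i : Fin n, F (π i.castSucc) * (X (π i.succ) - X (π i.castSucc)))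
          - (A t - A s)| ≤ ε := by
  obtain ⟨C, hC⟩ := hA
  intro ε hε
  set κ := γ + ρ - 1 with hκdef
  have hκ : 0 < κ := by linarith
  set C' : ℝ := max C 0 with hC'def
  have hC'0 : 0 ≤ C' := le_max_right _ _
  set D : ℝ := C' * (t - s) + 1 with hDdef
  have hD : 0 < D := by nlinarith [sub_pos.mpr hst]
  set δ : ℝ := (ε / D) ^ (1 / κ) with hδdef
  have hεD : 0 < ε / D := div_pos hε hD
  have hδ : 0 < δ := Real.rpow_pos_of_pos hεD _
  have hδκ : δ ^ κ = ε / D := by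
    rw [hδdef, ← Real.rpow_mul hεD.le, one_div_mul_cancel hκ.ne', Real.rpow_one]
  refine ⟨δ, hδ, ?_⟩
  intro n π hmono h0 hlast hmem hmesh
  have htele : ∑ i : Fin n, (A (π i.succ) - A (π i.castSucc)) = A t - A s := by
    rw [tele_sum A n π, hlast, h0]
  have htele2 : ∑ i : Fin n, (π i.succ - π i.castSucc) = t - s := by
    simpa [hlast, h0] using tele_sum id n π
  calc |(∑ i : Fin n, F (π i.castSucc) * (X (π i.succ) - X (π i.castSucc))) - (A t - A s)|
      = |∑ i : Fin n, (F (π i.castSucc) * (X (π i.succ) - X (π i.castSucc))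
          - (A (π i.succ) - A (π i.castSucc)))| := by
        rw [Finset.sum_sub_distrib, htele]
    _ ≤ ∑ i : Fin n, |F (π i.castSucc) * (X (π i.succ) - X (π i.castSucc))
          - (A (π i.succ) - A (π i.castSucc))| := Finset.abs_sum_le_sum_abs _ _
    _ ≤ ∑ i : Fin n, C' * δ ^ κ * (π i.succ - π i.castSucc) := by
        apply Finset.sum_le_sum
        intro i _
        have hle : π i.castSucc ≤ π i.succ := hmono (Fin.castSucc_le_succ i)
        set Δ := π i.succ - π i.castSucc with hΔdef
        have hΔ0 : 0 ≤ Δ := sub_nonneg.mpr hle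
        have hΔδ : Δ < δ := hmesh i
        have h1 : |F (π i.castSucc) * (X (π i.succ) - X (π i.castSucc))
            - (A (π i.succ) - A (π i.castSucc))| ≤ C * |Δ| ^ (γ + ρ) := by
          rw [abs_sub_comm]
          exact hC _ (hmem _) _ (hmem _)
        have h2 : C * |Δ| ^ (γ + ρ) ≤ C' * Δ ^ (γ + ρ) := by
          rw [abs_of_nonneg hΔ0]
          exact mul_le_mul_of_nonneg_right (le_max_left _ _)
            (Real.rpow_nonneg hΔ0 _)
        have h3 : Δ ^ (γ + ρ) ≤ δ ^ κ * Δ := by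
          have : Δ ^ (γ + ρ) = Δ ^ κ * Δ := by
            rw [hκdef]
            rw [show γ + ρ = (γ + ρ - 1) + 1 by ring,
              Real.rpow_add' hΔ0 (by intro h; simp at h; linarith), Real.rpow_one]
            norm_num
          rw [this]
          exact mul_le_mul_of_nonneg_right
            (Real.rpow_le_rpow hΔ0 hΔδ.le hκ.le) hΔ0
        calc _ ≤ C * |Δ| ^ (γ + ρ) := h1
          _ ≤ C' * Δ ^ (γ + ρ) := h2
          _ ≤ C' * (δ ^ κ * Δ) := mul_le_mul_of_nonneg_left h3 hC'0
          _ = C' * δ ^ κ * Δ := by ring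
    _ = C' * δ ^ κ * (t - s) := by rw [← Finset.mul_sum, htele2]
    _ = C' * (t - s) * (ε / D) := by rw [hδκ]; ring
    _ ≤ D * (ε / D) := mul_le_mul_of_nonneg_right (by simp [hDdef]) hεD.le
    _ = ε := by field_simp
end

section
/- (Transitivity of controlled paths) Fix interval I and paths X ∈ C^γ(I,V), Y with (Y,Y') ∈ D_X^{γ,σ}(I,V), and (Z,F) ∈ D_Y^{γ,η}(I,V). Then Z is controlled by X with remainder of order min(σ,η): writing δZ = F δY + R_{ZY} and δY = G δX + R_Y, one has δZ = (FG) δX + (R_{ZY} + F R_Y), and ‖(Z, FG)‖_{D(X,γ,min(σ,η)),I} ≤ K ‖Z‖_{D(Y,γ,η),I} (1 + ‖Y‖_{D(X,γ,σ),I})(1 + ‖X‖_{γ,I}) for a universal constant K. -/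
private lemma interp_aux {r c d x p m q : ℝ} (hx : 0 ≤ x) (hm : 0 < m)
    (hpm : p ≤ m) (hmq : m ≤ q) (hc : 0 ≤ c) (hd : 0 ≤ d)
    (h1 : r ≤ c * x ^ q) (h2 : r ≤ d * x ^ p) : r ≤ (c + d) * x ^ m := by
  have hxm : 0 ≤ x ^ m := Real.rpow_nonneg hx _
  rcases eq_or_lt_of_le hx with h0 | h0
  · have hq : (0:ℝ) ^ q = 0 := Real.zero_rpow (by linarith : q ≠ 0)
    rw [← h0, hq, mul_zero] at h1
    rw [← h0, Real.zero_rpow hm.ne', mul_zero]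
    exact h1
  · rcases le_or_gt x 1 with hx1 | hx1
    · have h := Real.rpow_le_rpow_of_exponent_ge h0 hx1 hmq
      have : r ≤ c * x ^ m := h1.trans (mul_le_mul_of_nonneg_left h hc)
      nlinarith
    · have h := Real.rpow_le_rpow_of_exponent_le hx1.le hpm
      have : r ≤ d * x ^ m := h2.trans (mul_le_mul_of_nonneg_left h hd)
      nlinarith

/-- Transitivity of controlled paths: if `(Z, F) ∈ D_Y^{γ,η}` and `(Y, G) ∈ D_X^{γ,σ}`,
then `Z` is controlled by `X` with derivative `F G` and remainder of order `min σ η`: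
`δZ = (FG) δX + (R_{ZY} + F R_Y)`, and there is a universal constant `K` with
`‖(Z, FG)‖_{D(X,γ,min σ η),I} ≤ K ‖Z‖_{D(Y,γ,η),I} (1 + ‖Y‖_{D(X,γ,σ),I})(1 + ‖X‖_{γ,I})`. -/
theorem controlled_paths_transitivity :
    ∃ K : ℝ, 0 < K ∧
      ∀ (E : Type) [NormedAddCommGroup E] [NormedSpace ℝ E] [FiniteDimensional ℝ E],
      ∀ (I : Set ℝ) (γ σ η : ℝ) (X Y Z : ℝ → E) (G F : ℝ → E →L[ℝ] E)
        (CX CGi CGh CRY CYh CFi CFh CRZ CZh : ℝ),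
        I.OrdConnected → 0 < γ → γ < σ → γ < η →
        0 ≤ CX → 0 ≤ CGi → 0 ≤ CGh → 0 ≤ CRY → 0 ≤ CYh →
        0 ≤ CFi → 0 ≤ CFh → 0 ≤ CRZ → 0 ≤ CZh →
        (∀ s ∈ I, ∀ t ∈ I, ‖X t - X s‖ ≤ CX * |t - s| ^ γ) →
        (∀ t ∈ I, ‖G t‖ ≤ CGi) →
        (∀ s ∈ I, ∀ t ∈ I, ‖G t - G s‖ ≤ CGh * |t - s| ^ (σ - γ)) →
        (∀ s ∈ I, ∀ t ∈ I, ‖Y t - Y s - G s (X t - X s)‖ ≤ CRY * |t - s| ^ σ) →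
        (∀ s ∈ I, ∀ t ∈ I, ‖Y t - Y s‖ ≤ CYh * |t - s| ^ γ) →
        (∀ t ∈ I, ‖F t‖ ≤ CFi) →
        (∀ s ∈ I, ∀ t ∈ I, ‖F t - F s‖ ≤ CFh * |t - s| ^ (η - γ)) →
        (∀ s ∈ I, ∀ t ∈ I, ‖Z t - Z s - F s (Y t - Y s)‖ ≤ CRZ * |t - s| ^ η) →
        (∀ s ∈ I, ∀ t ∈ I, ‖Z t - Z s‖ ≤ CZh * |t - s| ^ γ) →
        (∀ s t : ℝ,
            Z t - Z s - ((F s).comp (G s)) (X t - X s)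
              = (Z t - Z s - F s (Y t - Y s)) + F s (Y t - Y s - G s (X t - X s))) ∧
        ∃ D1 D2 D3 D4 : ℝ,
          (∀ t ∈ I, ‖(F t).comp (G t)‖ ≤ D1) ∧
          (∀ s ∈ I, ∀ t ∈ I,
              ‖(F t).comp (G t) - (F s).comp (G s)‖ ≤ D2 * |t - s| ^ (min σ η - γ)) ∧
          (∀ s ∈ I, ∀ t ∈ I,
              ‖Z t - Z s - ((F s).comp (G s)) (X t - X s)‖ ≤ D3 * |t - s| ^ (min σ η)) ∧
          (∀ s ∈ I, ∀ t ∈ I, ‖Z t - Z s‖ ≤ D4 * |t - s| ^ γ) ∧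
          D1 + D2 + D3 + D4
            ≤ K * (CFi + CFh + CRZ + CZh) * (1 + (CGi + CGh + CRY + CYh)) * (1 + CX) := by
  refine ⟨20, by norm_num, ?_⟩
  intro E _ _ _ I γ σ η X Y Z G F CX CGi CGh CRY CYh CFi CFh CRZ CZh
    _ hγ hγσ hγη hCX hCGi hCGh hCRY hCYh hCFi hCFh hCRZ hCZh
    hXh hGi hGh hRY hYh hFi hFh hRZ hZh
  set m := min σ η with hm
  have hγm : γ < m := lt_min hγσ hγη
  have hmσ : m ≤ σ := min_le_left _ _
  have hmη : m ≤ η := min_le_right _ _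
  constructor
  · intro s t
    simp only [ContinuousLinearMap.comp_apply, map_sub]
    abel
  · -- Hölder bounds of order m-γ for F and G increments
    have hFm : ∀ s ∈ I, ∀ t ∈ I, ‖F t - F s‖ ≤ (CFh + 2 * CFi) * |t - s| ^ (m - γ) := by
      intro s hs t ht
      refine interp_aux (p := 0) (abs_nonneg _) (by linarith) (by linarith) (by linarith)
        hCFh (by linarith) (hFh s hs t ht) ?_
      · rw [Real.rpow_zero, mul_one]
        calc ‖F t - F s‖ ≤ ‖F t‖ + ‖F s‖ := norm_sub_le _ _
          _ ≤ 2 * CFi := by have := hFi t ht; have := hFi s hs; linarith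
    have hGm : ∀ s ∈ I, ∀ t ∈ I, ‖G t - G s‖ ≤ (CGh + 2 * CGi) * |t - s| ^ (m - γ) := by
      intro s hs t ht
      refine interp_aux (p := 0) (abs_nonneg _) (by linarith) (by linarith) (by linarith)
        hCGh (by linarith) (hGh s hs t ht) ?_
      · rw [Real.rpow_zero, mul_one]
        calc ‖G t - G s‖ ≤ ‖G t‖ + ‖G s‖ := norm_sub_le _ _
          _ ≤ 2 * CGi := by have := hGi t ht; have := hGi s hs; linarith
    -- remainders of order m
    have hRZm : ∀ s ∈ I, ∀ t ∈ I,
        ‖Z t - Z s - F s (Y t - Y s)‖ ≤ (CRZ + (CZh + CFi * CYh)) * |t - s| ^ m := by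
      intro s hs t ht
      refine interp_aux (abs_nonneg _) (by linarith) (le_of_lt hγm) hmη hCRZ
        (by positivity) (hRZ s hs t ht) ?_
      calc ‖Z t - Z s - F s (Y t - Y s)‖ ≤ ‖Z t - Z s‖ + ‖F s (Y t - Y s)‖ := norm_sub_le _ _
        _ ≤ CZh * |t - s| ^ γ + CFi * (CYh * |t - s| ^ γ) := by
            refine add_le_add (hZh s hs t ht) ?_
            calc ‖F s (Y t - Y s)‖ ≤ ‖F s‖ * ‖Y t - Y s‖ := (F s).le_opNorm _
              _ ≤ CFi * (CYh * |t - s| ^ γ) :=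
                mul_le_mul (hFi s hs) (hYh s hs t ht) (norm_nonneg _) hCFi
        _ = (CZh + CFi * CYh) * |t - s| ^ γ := by ring
    have hRYm : ∀ s ∈ I, ∀ t ∈ I,
        ‖Y t - Y s - G s (X t - X s)‖ ≤ (CRY + (CYh + CGi * CX)) * |t - s| ^ m := by
      intro s hs t ht
      refine interp_aux (abs_nonneg _) (by linarith) (le_of_lt hγm) hmσ hCRY
        (by positivity) (hRY s hs t ht) ?_
      calc ‖Y t - Y s - G s (X t - X s)‖ ≤ ‖Y t - Y s‖ + ‖G s (X t - X s)‖ := norm_sub_le _ _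
        _ ≤ CYh * |t - s| ^ γ + CGi * (CX * |t - s| ^ γ) := by
            refine add_le_add (hYh s hs t ht) ?_
            calc ‖G s (X t - X s)‖ ≤ ‖G s‖ * ‖X t - X s‖ := (G s).le_opNorm _
              _ ≤ CGi * (CX * |t - s| ^ γ) :=
                mul_le_mul (hGi s hs) (hXh s hs t ht) (norm_nonneg _) hCGi
        _ = (CYh + CGi * CX) * |t - s| ^ γ := by ring
    refine ⟨CFi * CGi, (CFh + 2 * CFi) * CGi + CFi * (CGh + 2 * CGi),
      (CRZ + (CZh + CFi * CYh)) + CFi * (CRY + (CYh + CGi * CX)), CZh, ?_, ?_, ?_, ?_, ?_⟩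
    · intro t ht
      calc ‖(F t).comp (G t)‖ ≤ ‖F t‖ * ‖G t‖ := ContinuousLinearMap.opNorm_comp_le _ _
        _ ≤ CFi * CGi := mul_le_mul (hFi t ht) (hGi t ht) (norm_nonneg _) hCFi
    · intro s hs t ht
      have hdec : (F t).comp (G t) - (F s).comp (G s)
          = (F t - F s).comp (G t) + (F s).comp (G t - G s) := by
        ext v
        simp only [ContinuousLinearMap.add_apply, ContinuousLinearMap.sub_apply,
          ContinuousLinearMap.comp_apply, map_sub]
        abel
      have hxm : 0 ≤ |t - s| ^ (m - γ) := Real.rpow_nonneg (abs_nonneg _) _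
      calc ‖(F t).comp (G t) - (F s).comp (G s)‖
          = ‖(F t - F s).comp (G t) + (F s).comp (G t - G s)‖ := by rw [hdec]
        _ ≤ ‖(F t - F s).comp (G t)‖ + ‖(F s).comp (G t - G s)‖ := norm_add_le _ _
        _ ≤ ‖F t - F s‖ * ‖G t‖ + ‖F s‖ * ‖G t - G s‖ :=
            add_le_add (ContinuousLinearMap.opNorm_comp_le _ _)
              (ContinuousLinearMap.opNorm_comp_le _ _)
        _ ≤ ((CFh + 2 * CFi) * |t - s| ^ (m - γ)) * CGi
              + CFi * ((CGh + 2 * CGi) * |t - s| ^ (m - γ)) := by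
            refine add_le_add
              (mul_le_mul (hFm s hs t ht) (hGi t ht) (norm_nonneg _) (by positivity))
              (mul_le_mul (hFi s hs) (hGm s hs t ht) (norm_nonneg _) hCFi)
        _ = ((CFh + 2 * CFi) * CGi + CFi * (CGh + 2 * CGi)) * |t - s| ^ (m - γ) := by ring
    · intro s hs t ht
      have hxm : 0 ≤ |t - s| ^ m := Real.rpow_nonneg (abs_nonneg _) _
      have hid : Z t - Z s - ((F s).comp (G s)) (X t - X s)
          = (Z t - Z s - F s (Y t - Y s)) + F s (Y t - Y s - G s (X t - X s)) := by
        simp only [ContinuousLinearMap.comp_apply, map_sub]; abel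
      calc ‖Z t - Z s - ((F s).comp (G s)) (X t - X s)‖
          ≤ ‖Z t - Z s - F s (Y t - Y s)‖ + ‖F s (Y t - Y s - G s (X t - X s))‖ := by
            rw [hid]; exact norm_add_le _ _
        _ ≤ (CRZ + (CZh + CFi * CYh)) * |t - s| ^ m
              + CFi * ((CRY + (CYh + CGi * CX)) * |t - s| ^ m) := by
            refine add_le_add (hRZm s hs t ht) ?_
            calc ‖F s (Y t - Y s - G s (X t - X s))‖
                ≤ ‖F s‖ * ‖Y t - Y s - G s (X t - X s)‖ := (F s).le_opNorm _
              _ ≤ CFi * ((CRY + (CYh + CGi * CX)) * |t - s| ^ m) :=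
                  mul_le_mul (hFi s hs) (hRYm s hs t ht) (norm_nonneg _) hCFi
        _ = ((CRZ + (CZh + CFi * CYh)) + CFi * (CRY + (CYh + CGi * CX))) * |t - s| ^ m := by
            ring
    · exact hZh
    · nlinarith [mul_nonneg hCFi hCGi, mul_nonneg hCFh hCGi, mul_nonneg hCFi hCGh,
        mul_nonneg hCFi hCYh, mul_nonneg hCFi hCRY,
        mul_nonneg (mul_nonneg hCFi hCGi) hCX,
        mul_nonneg hCFi hCX, mul_nonneg hCFh hCX, mul_nonneg hCRZ hCX, mul_nonneg hCZh hCX,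
        mul_nonneg hCFh hCGh, mul_nonneg hCFh hCRY, mul_nonneg hCFh hCYh,
        mul_nonneg hCRZ hCGi, mul_nonneg hCZh hCGi,
        mul_nonneg (mul_nonneg hCFi hCGh) hCX, mul_nonneg (mul_nonneg hCFi hCRY) hCX,
        mul_nonneg (mul_nonneg hCFi hCYh) hCX, mul_nonneg (mul_nonneg hCFh hCGi) hCX]
end

section
/- (Rough integral as limit of compensated Riemann sums) Under the hypotheses of the rough integral theorem ((Z,Z'),(W,W') ∈ D_X^{γ,η}(I,V), η+γ > 1), one has ∫_s^t Z dW = lim_{|Π|→0} Σᵢ [Z_{tᵢ} δW_{tᵢ t_{i+1}} + Z'_{tᵢ} W'_{tᵢ} 𝕏²_{tᵢ t_{i+1}}], the limit over partitions of [s,t] with mesh tending to 0. -/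
open Finset

private lemma telescope_aux (I : Set ℝ) (F : ℝ → ℝ → ℝ)
    (hadd : ∀ s ∈ I, ∀ u ∈ I, ∀ t ∈ I, F s t = F s u + F u t) :
    ∀ (n : ℕ) (π : Fin (n + 1) → ℝ), (∀ i, π i ∈ I) →
      F (π 0) (π (Fin.last n)) = ∑ i : Fin n, F (π i.castSucc) (π i.succ) := by
  intro n
  induction n with
  | zero =>
    intro π hπ
    have h := hadd (π 0) (hπ 0) (π 0) (hπ 0) (π 0) (hπ 0)
    have h0 : Fin.last 0 = 0 := rfl
    rw [h0]
    simp only [Finset.univ_eq_empty, Finset.sum_empty]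
    linarith
  | succ n ih =>
    intro π hπ
    have key := ih (fun i => π i.castSucc) (fun i => hπ _)
    simp only [Fin.castSucc_zero] at key
    have hsplit := hadd (π 0) (hπ 0) (π (Fin.castSucc (Fin.last n))) (hπ _)
      (π (Fin.last (n + 1))) (hπ _)
    rw [Fin.sum_univ_castSucc]
    have hlast : (Fin.last n).succ = Fin.last (n + 1) := Fin.succ_last n
    rw [hsplit, key, hlast]
    congr 1

/-- The rough integral is the limit of compensated Riemann sums: under the hypotheses
of the rough-integral theorem, `∫_s^t Z dW = lim_{|Π|→0} ∑ᵢ [Z_{tᵢ} δW_{tᵢt_{i+1}}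
+ Z'_{tᵢ} W'_{tᵢ} 𝕏²_{tᵢt_{i+1}}]` over partitions of `[s,t]` with mesh tending to 0,
where the integral `Int` is characterized by additivity and the local expansion
`|Int_{st} - Z_s δW_{st} - Z'_s W'_s 𝕏²_{st}| ≤ C |t-s|^{η+γ}`. -/
theorem rough_integral_riemann_sums (d : ℕ) (I : Set ℝ) (hI : I.OrdConnected)
    (γ η : ℝ) (hγ : 0 < γ) (hγη : γ < η) (hδ : 1 < η + γ)
    (X : ℝ → Fin d → ℝ) (XX : ℝ → ℝ → Fin d → Fin d → ℝ)
    (Z W : ℝ → Fin d → ℝ) (Z' W' : ℝ → Fin d → Fin d → ℝ)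
    (CX CXX CZ1 CZ2 CZ3 CZ4 CW1 CW2 CW3 CW4 : ℝ)
    (hX : ∀ s ∈ I, ∀ t ∈ I, ∀ μ : Fin d, |X t μ - X s μ| ≤ CX * |t - s| ^ γ)
    (hXX : ∀ s ∈ I, ∀ t ∈ I, ∀ μ ν : Fin d, |XX s t μ ν| ≤ CXX * |t - s| ^ (2 * γ))
    (chen : ∀ s ∈ I, ∀ u ∈ I, ∀ t ∈ I, ∀ μ ν : Fin d,
        XX s t μ ν - XX u t μ ν - XX s u μ ν = (X u μ - X s μ) * (X t ν - X u ν))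
    (hZ'i : ∀ t ∈ I, ∀ μ ν : Fin d, |Z' t μ ν| ≤ CZ1)
    (hZ'h : ∀ s ∈ I, ∀ t ∈ I, ∀ μ ν : Fin d,
        |Z' t μ ν - Z' s μ ν| ≤ CZ2 * |t - s| ^ (η - γ))
    (hRZ : ∀ s ∈ I, ∀ t ∈ I, ∀ μ : Fin d,
        |Z t μ - Z s μ - ∑ κ : Fin d, Z' s μ κ * (X t κ - X s κ)| ≤ CZ3 * |t - s| ^ η)
    (hZh : ∀ s ∈ I, ∀ t ∈ I, ∀ μ : Fin d, |Z t μ - Z s μ| ≤ CZ4 * |t - s| ^ γ)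
    (hW'i : ∀ t ∈ I, ∀ μ ν : Fin d, |W' t μ ν| ≤ CW1)
    (hW'h : ∀ s ∈ I, ∀ t ∈ I, ∀ μ ν : Fin d,
        |W' t μ ν - W' s μ ν| ≤ CW2 * |t - s| ^ (η - γ))
    (hRW : ∀ s ∈ I, ∀ t ∈ I, ∀ μ : Fin d,
        |W t μ - W s μ - ∑ κ : Fin d, W' s μ κ * (X t κ - X s κ)| ≤ CW3 * |t - s| ^ η)
    (hWh : ∀ s ∈ I, ∀ t ∈ I, ∀ μ : Fin d, |W t μ - W s μ| ≤ CW4 * |t - s| ^ γ)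
    (Int : ℝ → ℝ → Fin d → Fin d → ℝ)
    (hadd : ∀ s ∈ I, ∀ u ∈ I, ∀ t ∈ I, ∀ μ ν : Fin d,
        Int s t μ ν = Int s u μ ν + Int u t μ ν)
    (hloc : ∃ C : ℝ, ∀ s ∈ I, ∀ t ∈ I, ∀ μ ν : Fin d,
        |Int s t μ ν - Z s μ * (W t ν - W s ν)
            - ∑ κ : Fin d, ∑ ρ : Fin d, Z' s μ κ * W' s ν ρ * XX s t κ ρ|
          ≤ C * |t - s| ^ (η + γ))
    (s t : ℝ) (hs : s ∈ I) (ht : t ∈ I) (hst : s < t) :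
    ∀ ε > (0 : ℝ), ∃ δ > (0 : ℝ), ∀ (n : ℕ) (π : Fin (n + 1) → ℝ),
      Monotone π → π 0 = s → π (Fin.last n) = t →
      (∀ i : Fin (n + 1), π i ∈ I) →
      (∀ i : Fin n, π i.succ - π i.castSucc < δ) →
      ∀ μ ν : Fin d,
        |(∑ i : Fin n,
            (Z (π i.castSucc) μ * (W (π i.succ) ν - W (π i.castSucc) ν)
              + ∑ κ : Fin d, ∑ ρ : Fin d,
                  Z' (π i.castSucc) μ κ * W' (π i.castSucc) ν ρ
                    * XX (π i.castSucc) (π i.succ) κ ρ))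
            - Int s t μ ν| ≤ ε := by
  obtain ⟨C, hC⟩ := hloc
  set C' := max C 0 with hC'def
  have hC'0 : (0:ℝ) ≤ C' := le_max_right _ _
  have hCC' : C ≤ C' := le_max_left _ _
  intro ε hε
  have hts : 0 < t - s := sub_pos.2 hst
  set K := C' * (t - s) + 1 with hKdef
  have hK0 : (0:ℝ) < K := by positivity
  have he : 0 < η + γ - 1 := by linarith
  refine ⟨(ε / K) ^ (1 / (η + γ - 1)), Real.rpow_pos_of_pos (by positivity) _, ?_⟩
  intro n π hmono hπ0 hπl hπI hmesh μ ν
  set δ₀ := (ε / K) ^ (1 / (η + γ - 1)) with hδ₀def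
  have hδpow : δ₀ ^ (η + γ - 1) = ε / K := by
    rw [hδ₀def, one_div, Real.rpow_inv_rpow (by positivity) (by linarith)]
  have hδ00 : 0 ≤ δ₀ := (Real.rpow_pos_of_pos (by positivity) _).le
  have hInt : Int s t μ ν = ∑ i : Fin n, Int (π i.castSucc) (π i.succ) μ ν := by
    have h := telescope_aux I (fun a b => Int a b μ ν)
      (fun a ha b hb c hc => hadd a ha b hb c hc μ ν) n π hπI
    rwa [hπ0, hπl] at h
  have hsum : ∑ i : Fin n, (π i.succ - π i.castSucc) = t - s := by
    have h := telescope_aux Set.univ (fun a b => b - a)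
      (fun a _ b _ c _ => by ring) n π (fun i => Set.mem_univ _)
    rw [hπ0, hπl] at h
    simpa using h.symm
  rw [hInt, ← Finset.sum_sub_distrib]
  have hterm : ∀ i : Fin n,
      |(Z (π i.castSucc) μ * (W (π i.succ) ν - W (π i.castSucc) ν)
          + ∑ κ : Fin d, ∑ ρ : Fin d,
              Z' (π i.castSucc) μ κ * W' (π i.castSucc) ν ρ
                * XX (π i.castSucc) (π i.succ) κ ρ)
          - Int (π i.castSucc) (π i.succ) μ ν|
        ≤ C' * (ε / K) * (π i.succ - π i.castSucc) := by
    intro i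
    set a := π i.castSucc
    set b := π i.succ
    have hΔ0 : 0 ≤ b - a := sub_nonneg.2 (hmono (Fin.castSucc_le_succ i))
    have hΔδ : b - a ≤ δ₀ := (hmesh i).le
    have h1 := hC a (hπI _) b (hπI _) μ ν
    have habs : |b - a| = b - a := abs_of_nonneg hΔ0
    rw [habs] at h1
    have heq : (Z a μ * (W b ν - W a ν)
          + ∑ κ : Fin d, ∑ ρ : Fin d, Z' a μ κ * W' a ν ρ * XX a b κ ρ)
          - Int a b μ ν
        = -(Int a b μ ν - Z a μ * (W b ν - W a ν)
          - ∑ κ : Fin d, ∑ ρ : Fin d, Z' a μ κ * W' a ν ρ * XX a b κ ρ) := by ring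
    rw [heq, abs_neg]
    have hpow : (b - a) ^ (η + γ) ≤ ε / K * (b - a) := by
      rcases eq_or_lt_of_le hΔ0 with h0 | h0
      · rw [← h0, Real.zero_rpow (by linarith : η + γ ≠ 0)]
        simp
      · have h2 : (b - a) ^ (η + γ) = (b - a) ^ (η + γ - 1) * (b - a) := by
          have h4 := Real.rpow_add h0 (η + γ - 1) 1
          rw [Real.rpow_one] at h4
          rw [← h4]
          congr 1
          ring
        have h3 : (b - a) ^ (η + γ - 1) ≤ δ₀ ^ (η + γ - 1) :=
          Real.rpow_le_rpow hΔ0 hΔδ he.le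
        rw [hδpow] at h3
        rw [h2]
        exact mul_le_mul_of_nonneg_right h3 hΔ0
    have hpow0 : 0 ≤ (b - a) ^ (η + γ) := Real.rpow_nonneg hΔ0 _
    calc |Int a b μ ν - Z a μ * (W b ν - W a ν)
          - ∑ κ : Fin d, ∑ ρ : Fin d, Z' a μ κ * W' a ν ρ * XX a b κ ρ|
        ≤ C * (b - a) ^ (η + γ) := h1
      _ ≤ C' * (b - a) ^ (η + γ) := mul_le_mul_of_nonneg_right hCC' hpow0
      _ ≤ C' * (ε / K * (b - a)) := mul_le_mul_of_nonneg_left hpow hC'0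
      _ = C' * (ε / K) * (b - a) := by ring
  calc |∑ i : Fin n, ((Z (π i.castSucc) μ * (W (π i.succ) ν - W (π i.castSucc) ν)
          + ∑ κ : Fin d, ∑ ρ : Fin d, Z' (π i.castSucc) μ κ * W' (π i.castSucc) ν ρ
              * XX (π i.castSucc) (π i.succ) κ ρ)
          - Int (π i.castSucc) (π i.succ) μ ν)|
      ≤ ∑ i : Fin n, |(Z (π i.castSucc) μ * (W (π i.succ) ν - W (π i.castSucc) ν)
          + ∑ κ : Fin d, ∑ ρ : Fin d, Z' (π i.castSucc) μ κ * W' (π i.castSucc) ν ρ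
              * XX (π i.castSucc) (π i.succ) κ ρ)
          - Int (π i.castSucc) (π i.succ) μ ν| := Finset.abs_sum_le_sum_abs _ _
    _ ≤ ∑ i : Fin n, C' * (ε / K) * (π i.succ - π i.castSucc) :=
        Finset.sum_le_sum fun i _ => hterm i
    _ = C' * (ε / K) * (t - s) := by rw [← Finset.mul_sum, hsum]
    _ ≤ ε := by
        have h1 : C' * (t - s) ≤ K := by linarith
        have h2 : C' * (ε / K) * (t - s) = C' * (t - s) * (ε / K) := by ring
        have h3 : C' * (t - s) * (ε / K) ≤ K * (ε / K) :=
          mul_le_mul_of_nonneg_right h1 (by positivity)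
        have h4 : K * (ε / K) = ε := by field_simp
        linarith
end

section
/- (Hölder patching lemma) Let I, J be two intervals with nonempty intersection, X ∈ ΩC^γ(I,V), X ∈ ΩC^γ(J,V), and suppose NX ∈ ΩC^{γ₁,γ₂}(I∪J, V) with γ = γ₁ + γ₂. Then X ∈ ΩC^γ(I∪J, V) and ‖X‖_{γ, I∪J} ≤ 2(‖X‖_{γ,I} + ‖X‖_{γ,J}) + ‖NX‖_{γ₁,γ₂, I∪J}. -/
lemma holder_patch_aux {E : Type} [NormedAddCommGroup E] (X : ℝ → ℝ → E)
    (s u t CA CB CN γ γ₁ γ₂ : ℝ)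
    (hγ : γ = γ₁ + γ₂) (h1 : 0 < γ₁) (h2 : 0 < γ₂)
    (hCA : 0 ≤ CA) (hCB : 0 ≤ CB) (hCN : 0 ≤ CN)
    (hsu : ‖X s u‖ ≤ CA * |u - s| ^ γ) (hut : ‖X u t‖ ≤ CB * |t - u| ^ γ)
    (hNst : ‖X s t - X u t - X s u‖ ≤ CN * |u - s| ^ γ₁ * |t - u| ^ γ₂)
    (h3 : |u - s| ≤ |t - s|) (h4 : |t - u| ≤ |t - s|) :
    ‖X s t‖ ≤ (CA + CB + CN) * |t - s| ^ γ := by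
  have hγ0 : 0 < γ := by rw [hγ]; linarith
  have hts : (0:ℝ) ≤ |t - s| := abs_nonneg _
  have hA : |u - s| ^ γ ≤ |t - s| ^ γ := Real.rpow_le_rpow (abs_nonneg _) h3 hγ0.le
  have hB : |t - u| ^ γ ≤ |t - s| ^ γ := Real.rpow_le_rpow (abs_nonneg _) h4 hγ0.le
  have hNb : |u - s| ^ γ₁ * |t - u| ^ γ₂ ≤ |t - s| ^ γ := by
    rw [hγ, Real.rpow_add_of_nonneg hts h1.le h2.le]
    exact mul_le_mul (Real.rpow_le_rpow (abs_nonneg _) h3 h1.le)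
      (Real.rpow_le_rpow (abs_nonneg _) h4 h2.le) (Real.rpow_nonneg (abs_nonneg _) _)
      (Real.rpow_nonneg hts _)
  have e : X s t = (X s t - X u t - X s u) + X u t + X s u := by abel
  calc ‖X s t‖ = ‖(X s t - X u t - X s u) + X u t + X s u‖ := by rw [← e]
    _ ≤ ‖X s t - X u t - X s u‖ + ‖X u t‖ + ‖X s u‖ := norm_add₃_le
    _ ≤ CN * (|u - s| ^ γ₁ * |t - u| ^ γ₂) + CB * |t - u| ^ γ + CA * |u - s| ^ γ := by
        rw [← mul_assoc]; linarith
    _ ≤ CN * |t - s| ^ γ + CB * |t - s| ^ γ + CA * |t - s| ^ γ := by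
        gcongr
    _ = (CA + CB + CN) * |t - s| ^ γ := by ring

/-- Hölder patching lemma: if `X ∈ ΩC^γ(I,V)`, `X ∈ ΩC^γ(J,V)` for two overlapping
intervals and `N X ∈ ΩC^{γ₁,γ₂}(I ∪ J, V)` with `γ = γ₁ + γ₂`, then
`X ∈ ΩC^γ(I ∪ J, V)` with `‖X‖_{γ,I∪J} ≤ 2(‖X‖_{γ,I} + ‖X‖_{γ,J}) + ‖NX‖_{γ₁,γ₂,I∪J}`. -/
theorem holder_patching (E : Type) [NormedAddCommGroup E]
    (I J : Set ℝ) (hI : I.OrdConnected) (hJ : J.OrdConnected)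
    (hIJ : (I ∩ J).Nonempty)
    (X : ℝ → ℝ → E) (γ γ₁ γ₂ CI CJ CN : ℝ)
    (hγ : γ = γ₁ + γ₂) (h1 : 0 < γ₁) (h2 : 0 < γ₂)
    (hCI : 0 ≤ CI) (hCJ : 0 ≤ CJ) (hCN : 0 ≤ CN)
    (hXI : ∀ s ∈ I, ∀ t ∈ I, ‖X s t‖ ≤ CI * |t - s| ^ γ)
    (hXJ : ∀ s ∈ J, ∀ t ∈ J, ‖X s t‖ ≤ CJ * |t - s| ^ γ)
    (hN : ∀ s ∈ I ∪ J, ∀ u ∈ I ∪ J, ∀ t ∈ I ∪ J,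
        ‖X s t - X u t - X s u‖ ≤ CN * |u - s| ^ γ₁ * |t - u| ^ γ₂) :
    ∀ s ∈ I ∪ J, ∀ t ∈ I ∪ J,
      ‖X s t‖ ≤ (2 * (CI + CJ) + CN) * |t - s| ^ γ := by
  obtain ⟨u, huI, huJ⟩ := hIJ
  intro s hs t ht
  have hrp : (0:ℝ) ≤ |t - s| ^ γ := Real.rpow_nonneg (abs_nonneg _) _
  -- upgrade bounds from single interval to the big constant
  have bigI : ∀ s' ∈ I, ∀ t' ∈ I, ‖X s' t'‖ ≤ (2 * (CI + CJ) + CN) * |t' - s'| ^ γ := by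
    intro s' hs' t' ht'
    exact le_trans (hXI s' hs' t' ht')
      (mul_le_mul_of_nonneg_right (by linarith) (Real.rpow_nonneg (abs_nonneg _) _))
  have bigJ : ∀ s' ∈ J, ∀ t' ∈ J, ‖X s' t'‖ ≤ (2 * (CI + CJ) + CN) * |t' - s'| ^ γ := by
    intro s' hs' t' ht'
    exact le_trans (hXJ s' hs' t' ht')
      (mul_le_mul_of_nonneg_right (by linarith) (Real.rpow_nonneg (abs_nonneg _) _))
  have mid : |u - s| ≤ |t - s| → |t - u| ≤ |t - s| →
      ‖X s u‖ ≤ CI * |u - s| ^ γ → ‖X u t‖ ≤ CJ * |t - u| ^ γ →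
      ‖X s t‖ ≤ (2 * (CI + CJ) + CN) * |t - s| ^ γ := by
    intro m1 m2 b1 b2
    refine le_trans (holder_patch_aux X s u t CI CJ CN γ γ₁ γ₂ hγ h1 h2 hCI hCJ hCN
      b1 b2 (hN s hs u (Or.inl huI) t ht) m1 m2) ?_
    exact mul_le_mul_of_nonneg_right (by linarith) hrp
  have midJI : |u - s| ≤ |t - s| → |t - u| ≤ |t - s| →
      ‖X s u‖ ≤ CJ * |u - s| ^ γ → ‖X u t‖ ≤ CI * |t - u| ^ γ →
      ‖X s t‖ ≤ (2 * (CI + CJ) + CN) * |t - s| ^ γ := by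
    intro m1 m2 b1 b2
    refine le_trans (holder_patch_aux X s u t CJ CI CN γ γ₁ γ₂ hγ h1 h2 hCJ hCI hCN
      b1 b2 (hN s hs u (Or.inl huI) t ht) m1 m2) ?_
    exact mul_le_mul_of_nonneg_right (by linarith) hrp
  rcases hs with hsI | hsJ <;> rcases ht with htI | htJ
  · exact bigI s hsI t htI
  · -- s ∈ I, t ∈ J
    rcases le_total s t with hst | hst
    · rcases le_or_gt u s with hu | hu
      · -- u ≤ s ≤ t, so s ∈ [u,t] ⊆ J
        exact bigJ s (hJ.out huJ htJ ⟨hu, hst⟩) t htJ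
      · rcases le_or_gt u t with hu' | hu'
        · -- s ≤ u ≤ t : middle
          refine mid ?_ ?_ (hXI s hsI u huI) (hXJ u huJ t htJ)
          · rw [abs_of_nonneg (by linarith), abs_of_nonneg (by linarith)]; linarith
          · rw [abs_of_nonneg (by linarith), abs_of_nonneg (by linarith)]; linarith
        · -- t < u, so t ∈ [s,u] ⊆ I
          exact bigI s hsI t (hI.out hsI huI ⟨hst, hu'.le⟩)
    · rcases le_or_gt u t with hu | hu
      · -- u ≤ t ≤ s, so t ∈ [u,s] ⊆ I
        exact bigI s hsI t (hI.out huI hsI ⟨hu, hst⟩)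
      · rcases le_or_gt u s with hu' | hu'
        · -- t ≤ u ≤ s : middle
          refine mid ?_ ?_ (hXI s hsI u huI) (hXJ u huJ t htJ)
          · rw [abs_of_nonpos (by linarith), abs_of_nonpos (by linarith)]; linarith
          · rw [abs_of_nonpos (by linarith), abs_of_nonpos (by linarith)]; linarith
        · -- s < u, so s ∈ [t,u] ⊆ J
          exact bigJ s (hJ.out htJ huJ ⟨hst, hu'.le⟩) t htJ
  · -- s ∈ J, t ∈ I
    rcases le_total s t with hst | hst
    · rcases le_or_gt u s with hu | hu
      · exact bigI s (hI.out huI htI ⟨hu, hst⟩) t htI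
      · rcases le_or_gt u t with hu' | hu'
        · refine midJI ?_ ?_ (hXJ s hsJ u huJ) (hXI u huI t htI)
          · rw [abs_of_nonneg (by linarith), abs_of_nonneg (by linarith)]; linarith
          · rw [abs_of_nonneg (by linarith), abs_of_nonneg (by linarith)]; linarith
        · exact bigJ s hsJ t (hJ.out hsJ huJ ⟨hst, hu'.le⟩)
    · rcases le_or_gt u t with hu | hu
      · exact bigJ s hsJ t (hJ.out huJ hsJ ⟨hu, hst⟩)
      · rcases le_or_gt u s with hu' | hu'
        · refine midJI ?_ ?_ (hXJ s hsJ u huJ) (hXI u huI t htI)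
          · rw [abs_of_nonpos (by linarith), abs_of_nonpos (by linarith)]; linarith
          · rw [abs_of_nonpos (by linarith), abs_of_nonpos (by linarith)]; linarith
        · exact bigI s (hI.out htI huI ⟨hst, hu'.le⟩) t htI
  · exact bigJ s hsJ t htJ
end
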